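/- arXiv:1510.08291 — 6 statements merged into one kernel-verified Lean document; each statement's English description precedes it below -/
import Mathlib

section
/- If M ≥ rank(X) (so that a factorization X = Φ·A with Φ ∈ ℝ^{p×M}, A ∈ ℝ^{M×K} exists), then the infimum defining ψ^M(X) is attained: there exist Φ ∈ ℝ^{p×M} and A ∈ ℝ^{M×K} with Φ·A = X and Σ_{m=1}^M n_Φ(Φ_m)·n_A((A_{m,:})ᵀ) = ψ^M(X). -/
/-!
Rescaling the column `Φ_m` by `t` and the row `A_m` by `t⁻¹` changes neither `Φ * A` nor the cost,
and for the right `t` both factors of the `m`-th term become equal, hence at most the square root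
of the total cost. Among factorizations whose cost is at most that of a fixed one, the balanced
ones therefore lie in a compact set, on which the continuous cost attains its minimum; since
balancing does not change the cost, that minimum is global.
-/

open scoped ENNReal

/-- The function `ψ^M(X)`: the infimum of `∑_{m=1}^M n_Φ(Φ_m) · n_A((A_{m,:})ᵀ)`
over all factorisations `Φ · A = X` with `Φ ∈ ℝ^{p×M}` and `A ∈ ℝ^{M×K}`
(the infimum over the empty set being `+∞`). -/
noncomputable def psi (p K : ℕ) (nPhi : (Fin p → ℝ) → ℝ) (nA : (Fin K → ℝ) → ℝ)
    (M : ℕ) (X : Matrix (Fin p) (Fin K) ℝ) : ℝ≥0∞ :=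
  ⨅ (Φ : Matrix (Fin p) (Fin M) ℝ) (A : Matrix (Fin M) (Fin K) ℝ) (_ : Φ * A = X),
    ENNReal.ofReal (∑ m : Fin M, nPhi (fun i => Φ i m) * nA (fun k => A m k))

open Set

namespace Seminorm

variable {E : Type*} [NormedAddCommGroup E] [NormedSpace ℝ E] [FiniteDimensional ℝ E]
  (p : Seminorm ℝ E)

theorem continuous_of_finiteDimensional : Continuous p :=
  p.convexOn.locallyLipschitz.continuous

theorem exists_norm_le_mul (hp : ∀ x, p x = 0 → x = 0) : ∃ C > 0, ∀ x, ‖x‖ ≤ C * p x := by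
  rcases subsingleton_or_nontrivial E with hE | hE
  · exact ⟨1, one_pos, fun x => by simp [Subsingleton.elim x 0]⟩
  obtain ⟨z, hz, hmin⟩ := (isCompact_sphere (0 : E) 1).exists_isMinOn
    (NormedSpace.sphere_nonempty.2 zero_le_one) p.continuous_of_finiteDimensional.continuousOn
  have hz₀ : 0 < p z := (apply_nonneg p z).lt_of_ne' fun h => by simp [hp z h] at hz
  refine ⟨(p z)⁻¹, inv_pos.2 hz₀, fun x => ?_⟩
  rcases eq_or_ne x 0 with rfl | hx
  · simp
  have hle : p z ≤ p (‖x‖⁻¹ • x) := hmin (by simp [norm_smul, hx])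
  rw [map_smul_eq_mul, norm_inv, norm_norm, le_inv_mul_iff₀ (norm_pos_iff.2 hx)] at hle
  rwa [le_inv_mul_iff₀ hz₀, mul_comm]

theorem isCompact_closedBall_zero (hp : ∀ x, p x = 0 → x = 0) (r : ℝ) :
    IsCompact (p.closedBall 0 r) := by
  obtain ⟨C, hC₀, hC⟩ := p.exists_norm_le_mul hp
  refine (isCompact_closedBall 0 (C * r)).of_isClosed_subset ?_ fun x hx => ?_
  · simpa only [closedBall_zero_eq] using
      isClosed_le p.continuous_of_finiteDimensional continuous_const
  · rw [mem_closedBall_zero_iff]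
    exact (hC x).trans (mul_le_mul_of_nonneg_left (p.mem_closedBall_zero.1 hx) hC₀.le)

end Seminorm

section Balancing

variable {E F G : Type*} [AddCommGroup E] [Module ℝ E] [AddCommGroup F] [Module ℝ F]
  [AddCommGroup G] [Module ℝ G] (p : Seminorm ℝ E) (q : Seminorm ℝ F)

/-- The factor `t` with `p (t • x) = q (t⁻¹ • y)`. It is `0` (division by zero) when `p x = 0` or
`q y = 0`, which sends the pair to `(0, 0)`. -/
noncomputable def balanceScale (x : E) (y : F) : ℝ := √(q y / p x)

theorem seminorm_balanceScale_smul (x : E) (y : F) :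
    p (balanceScale p q x y • x) = √(p x * q y) := by
  rw [map_smul_eq_mul, Real.norm_eq_abs, balanceScale, abs_of_nonneg (Real.sqrt_nonneg _)]
  rcases (apply_nonneg p x).eq_or_lt with hx | hx
  · simp [← hx]
  · rw [← Real.sqrt_sq (by positivity : 0 ≤ √(q y / p x) * p x), mul_pow,
      Real.sq_sqrt (by positivity)]
    congr 1
    field_simp

theorem seminorm_balanceScale_inv_smul (x : E) (y : F) :
    q ((balanceScale p q x y)⁻¹ • y) = √(p x * q y) := by
  rw [map_smul_eq_mul, Real.norm_eq_abs, balanceScale, ← Real.sqrt_inv, inv_div,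
    abs_of_nonneg (Real.sqrt_nonneg _)]
  rcases (apply_nonneg q y).eq_or_lt with hy | hy
  · simp [← hy]
  · rw [← Real.sqrt_sq (by positivity : 0 ≤ √(p x / q y) * q y), mul_pow,
      Real.sq_sqrt (by positivity)]
    congr 1
    field_simp

theorem map_balanceScale_smul (hp : ∀ x, p x = 0 → x = 0) (hq : ∀ y, q y = 0 → y = 0)
    (B : E →ₗ[ℝ] F →ₗ[ℝ] G) (x : E) (y : F) :
    B (balanceScale p q x y • x) ((balanceScale p q x y)⁻¹ • y) = B x y := by
  rcases eq_or_ne (balanceScale p q x y) 0 with ht | ht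
  · rw [balanceScale, Real.sqrt_eq_zero (by positivity), div_eq_zero_iff] at ht
    rcases ht with hy | hx
    · simp [hq y hy]
    · simp [hp x hx]
  · simp [ht]

end Balancing

section PairCost

variable {ι E F : Type*} [Fintype ι] [AddCommGroup E] [Module ℝ E] [AddCommGroup F]
  [Module ℝ F] (p : Seminorm ℝ E) (q : Seminorm ℝ F)

def pairCost (s : (ι → E) × (ι → F)) : ℝ := ∑ i, p (s.1 i) * q (s.2 i)

noncomputable def balance (s : (ι → E) × (ι → F)) : (ι → E) × (ι → F) :=
  (fun i => balanceScale p q (s.1 i) (s.2 i) • s.1 i,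
    fun i => (balanceScale p q (s.1 i) (s.2 i))⁻¹ • s.2 i)

theorem pairCost_balance (s : (ι → E) × (ι → F)) :
    pairCost p q (balance p q s) = pairCost p q s := by
  refine Finset.sum_congr rfl fun i _ => ?_
  rw [balance, seminorm_balanceScale_smul, seminorm_balanceScale_inv_smul,
    Real.mul_self_sqrt (mul_nonneg (apply_nonneg _ _) (apply_nonneg _ _))]

theorem seminorm_balance_le_sqrt_pairCost (s : (ι → E) × (ι → F)) (i : ι) :
    p ((balance p q s).1 i) ≤ √(pairCost p q s) ∧
      q ((balance p q s).2 i) ≤ √(pairCost p q s) := by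
  have hterm : p (s.1 i) * q (s.2 i) ≤ pairCost p q s :=
    Finset.single_le_sum (fun j _ => mul_nonneg (apply_nonneg p _) (apply_nonneg q _))
      (Finset.mem_univ i)
  rw [balance, seminorm_balanceScale_smul, seminorm_balanceScale_inv_smul]
  exact ⟨Real.sqrt_le_sqrt hterm, Real.sqrt_le_sqrt hterm⟩

theorem continuous_pairCost [TopologicalSpace E] [TopologicalSpace F] (hp : Continuous p)
    (hq : Continuous q) : Continuous (pairCost (ι := ι) p q) := by
  unfold pairCost
  fun_prop

end PairCost

section Minimization

variable {ι E F : Type*} [Fintype ι]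
  [NormedAddCommGroup E] [NormedSpace ℝ E] [FiniteDimensional ℝ E]
  [NormedAddCommGroup F] [NormedSpace ℝ F] [FiniteDimensional ℝ F]
  (p : Seminorm ℝ E) (q : Seminorm ℝ F)

theorem exists_isMinOn_pairCost (hp : ∀ x, p x = 0 → x = 0) (hq : ∀ y, q y = 0 → y = 0)
    {S : Set ((ι → E) × (ι → F))} (hS : IsClosed S) {s₀ : (ι → E) × (ι → F)} (hs₀ : s₀ ∈ S)
    (hbal : ∀ s ∈ S, balance p q s ∈ S) : ∃ s ∈ S, IsMinOn (pairCost p q) S s := by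
  set r := √(pairCost p q s₀)
  set T := S ∩ (univ.pi (fun _ => p.closedBall 0 r) ×ˢ univ.pi (fun _ => q.closedBall 0 r))
  have hT : IsCompact T :=
    ((isCompact_univ_pi fun _ => p.isCompact_closedBall_zero hp r).prod
      (isCompact_univ_pi fun _ => q.isCompact_closedBall_zero hq r)).inter_left hS
  have balance_mem : ∀ s ∈ S, pairCost p q s ≤ pairCost p q s₀ → balance p q s ∈ T := by
    intro s hs hcost
    refine ⟨hbal s hs, fun i _ => ?_, fun i _ => ?_⟩ <;> rw [Seminorm.mem_closedBall_zero]
    · exact (seminorm_balance_le_sqrt_pairCost p q s i).1.trans (Real.sqrt_le_sqrt hcost)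
    · exact (seminorm_balance_le_sqrt_pairCost p q s i).2.trans (Real.sqrt_le_sqrt hcost)
  obtain ⟨s, hsT, hmin⟩ := hT.exists_isMinOn ⟨_, balance_mem s₀ hs₀ le_rfl⟩
    (continuous_pairCost p q p.continuous_of_finiteDimensional
      q.continuous_of_finiteDimensional).continuousOn
  refine ⟨s, hsT.1, fun t ht => ?_⟩
  rcases le_total (pairCost p q t) (pairCost p q s₀) with h | h
  · calc pairCost p q s ≤ pairCost p q (balance p q t) := hmin (balance_mem t ht h)
      _ = pairCost p q t := pairCost_balance p q t
  · calc pairCost p q s ≤ pairCost p q (balance p q s₀) := hmin (balance_mem s₀ hs₀ le_rfl)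
      _ = pairCost p q s₀ := pairCost_balance p q s₀
      _ ≤ pairCost p q t := h

end Minimization

namespace Matrix

theorem exists_mul_eq_of_rank_le {m n K : Type*} [Fintype n] [Field K] (X : Matrix m n K) {M : ℕ}
    (hM : X.rank ≤ M) : ∃ (Φ : Matrix m (Fin M) K) (A : Matrix (Fin M) n K), Φ * A = X := by
  have := Module.Finite.span_of_finite K (finite_range X.col)
  obtain ⟨f, -, hspan, -⟩ := Submodule.exists_fun_fin_finrank_span_eq K (range X.col)
  rw [rank_eq_finrank_span_cols] at hM
  set g : Fin M → m → K := Function.extend (Fin.castLE hM) f 0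
  have hcol : ∀ k, X.col k ∈ Submodule.span K (range g) := by
    intro k
    refine Submodule.span_mono ?_ (hspan ▸ Submodule.subset_span (mem_range_self k))
    rintro _ ⟨j, rfl⟩
    exact ⟨Fin.castLE hM j, (Fin.castLE_injective hM).extend_apply f 0 j⟩
  choose c hc using fun k => (Submodule.mem_span_range_iff_exists_fun K).1 (hcol k)
  refine ⟨of fun i j => g j i, of fun j k => c k j, ?_⟩
  ext i k
  simpa [mul_apply, mul_comm] using congrFun (hc k) i

theorem exists_mul_eq_forall_pairCost_le {m n : Type*} [Fintype m] [Fintype n]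
    (p : Seminorm ℝ (m → ℝ)) (q : Seminorm ℝ (n → ℝ)) (hp : ∀ x, p x = 0 → x = 0)
    (hq : ∀ y, q y = 0 → y = 0) (X : Matrix m n ℝ) {M : ℕ} (hM : X.rank ≤ M) :
    ∃ (Φ : Matrix m (Fin M) ℝ) (A : Matrix (Fin M) n ℝ), Φ * A = X ∧
      ∀ (Φ' : Matrix m (Fin M) ℝ) (A' : Matrix (Fin M) n ℝ), Φ' * A' = X →
        pairCost p q (Φᵀ, A) ≤ pairCost p q (Φ'ᵀ, A') := by
  set S : Set ((Fin M → m → ℝ) × (Fin M → n → ℝ)) := {s | (of s.1)ᵀ * of s.2 = X}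
  obtain ⟨Φ₀, A₀, h₀⟩ := X.exists_mul_eq_of_rank_le hM
  have hS : IsClosed S := isClosed_eq (by fun_prop) continuous_const
  have hbal : ∀ s ∈ S, balance p q s ∈ S := by
    intro s (hs : _ = X)
    change _ = X
    rw [← hs]
    ext i k
    simp only [mul_apply, transpose_apply, of_apply]
    exact Finset.sum_congr rfl fun j _ => map_balanceScale_smul p q hp hq
      ((LinearMap.mul ℝ ℝ).compl₁₂ (LinearMap.proj i) (LinearMap.proj k)) _ _
  obtain ⟨s, hs, hmin⟩ := exists_isMinOn_pairCost p q hp hq hS (s₀ := (Φ₀ᵀ, A₀)) h₀ hbal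
  exact ⟨(of s.1)ᵀ, of s.2, hs, fun Φ' A' h => hmin (show (Φ'ᵀ, A') ∈ S from h)⟩

end Matrix

/-- If `M ≥ rank(X)`, the infimum defining `ψ^M(X)` is attained. -/
theorem psi_attained (p K : ℕ) (nPhi : (Fin p → ℝ) → ℝ) (nA : (Fin K → ℝ) → ℝ)
    (hPhi_add : ∀ x y, nPhi (x + y) ≤ nPhi x + nPhi y)
    (hPhi_smul : ∀ (c : ℝ) (x), nPhi (c • x) = |c| * nPhi x)
    (hPhi_def : ∀ x, nPhi x = 0 ↔ x = 0)
    (hA_add : ∀ x y, nA (x + y) ≤ nA x + nA y)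
    (hA_smul : ∀ (c : ℝ) (x), nA (c • x) = |c| * nA x)
    (hA_def : ∀ x, nA x = 0 ↔ x = 0)
    (M : ℕ) (X : Matrix (Fin p) (Fin K) ℝ) (hM : X.rank ≤ M) :
    ∃ (Φ : Matrix (Fin p) (Fin M) ℝ) (A : Matrix (Fin M) (Fin K) ℝ),
      Φ * A = X ∧
      ENNReal.ofReal (∑ m : Fin M, nPhi (fun i => Φ i m) * nA (fun k => A m k)) =
        psi p K nPhi nA M X := by
  let sPhi : Seminorm ℝ (Fin p → ℝ) := .of nPhi hPhi_add (by simpa only [Real.norm_eq_abs])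
  let sA : Seminorm ℝ (Fin K → ℝ) := .of nA hA_add (by simpa only [Real.norm_eq_abs])
  obtain ⟨Φ, A, hΦA, hmin⟩ := X.exists_mul_eq_forall_pairCost_le sPhi sA
    (fun x => (hPhi_def x).1) (fun y => (hA_def y).1) hM
  refine ⟨Φ, A, hΦA, le_antisymm ?_ (iInf₂_le_of_le Φ A (iInf_le_of_le hΦA le_rfl))⟩
  exact le_iInf₂ fun Φ' A' => le_iInf fun h => ENNReal.ofReal_le_ofReal (hmin Φ' A' h)
end

section
/- If both n_Φ and n_A are the Euclidean (ℓ2) norms, then for every M ≥ min(p, K) and every X ∈ ℝ^{p×K}, ψ^M(X) equals the nuclear norm of X, i.e. ψ^M(X) = trace(√(XᵀX)), where √(XᵀX) is the positive semidefinite square root of the positive semidefinite matrix XᵀX. -/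
open scoped ENNReal
open Matrix

/-- `ψ^M(X)` with both norms being the Euclidean (ℓ2) norm: the infimum of
`∑_{m=1}^M ‖Φ_m‖₂ · ‖(A_{m,:})ᵀ‖₂` over all factorisations `Φ · A = X`. -/
noncomputable def psiL2 (p K M : ℕ) (X : Matrix (Fin p) (Fin K) ℝ) : ℝ≥0∞ :=
  ⨅ (Φ : Matrix (Fin p) (Fin M) ℝ) (A : Matrix (Fin M) (Fin K) ℝ) (_ : Φ * A = X),
    ENNReal.ofReal (∑ m : Fin M,
      Real.sqrt (∑ i, (Φ i m) ^ 2) * Real.sqrt (∑ k, (A m k) ^ 2))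

/-!
Diagonalise `S = ∑ᵢ σᵢ vᵢ vᵢᵀ` with `σᵢ ≥ 0`. Since `XᵀX = S²`, the vectors `X vᵢ` are pairwise
orthogonal with `‖X vᵢ‖ = σᵢ`. Hence `X = ∑_{σᵢ ≠ 0} (X vᵢ) vᵢᵀ` is a factorisation into at most
`min p K` rank-one terms, of cost `∑ σᵢ = tr S`. Conversely, the `uᵢ = σᵢ⁻¹ X vᵢ` (`σᵢ ≠ 0`) are
orthonormal, and for any factorisation `X = Φ A`
`tr S = ∑ᵢ uᵢᵀ Φ A vᵢ = ∑ₘ ∑ᵢ ⟨uᵢ, Φₘ⟩ ⟨vᵢ, Aₘ⟩ ≤ ∑ₘ ‖Φₘ‖ ‖Aₘ‖`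
by Cauchy–Schwarz and Bessel's inequality.
-/

open scoped InnerProductSpace
open WithLp

section Bessel

variable {ι E F : Type*} [Fintype ι] [NormedAddCommGroup E] [InnerProductSpace ℝ E]
  [NormedAddCommGroup F] [InnerProductSpace ℝ F]

theorem Orthonormal.sqrt_sum_inner_sq_le {u : ι → E} (hu : Orthonormal ℝ u) (a : E) :
    √(∑ i, ⟪u i, a⟫_ℝ ^ 2) ≤ ‖a‖ := by
  refine Real.sqrt_le_iff.mpr ⟨norm_nonneg a, ?_⟩
  simpa only [Real.norm_eq_abs, sq_abs] using hu.sum_inner_products_le a (s := Finset.univ)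

theorem Orthonormal.sum_inner_mul_inner_le {u : ι → E} {v : ι → F} (hu : Orthonormal ℝ u)
    (hv : Orthonormal ℝ v) (a : E) (b : F) :
    ∑ i, ⟪u i, a⟫_ℝ * ⟪v i, b⟫_ℝ ≤ ‖a‖ * ‖b‖ :=
  (Real.sum_mul_le_sqrt_mul_sqrt _ _ _).trans <|
    mul_le_mul (hu.sqrt_sum_inner_sq_le a) (hv.sqrt_sum_inner_sq_le b) (Real.sqrt_nonneg _)
      (norm_nonneg a)

end Bessel

theorem Fintype.sum_subtype_eq_sum {ι M : Type*} [Fintype ι] [AddCommMonoid M] {P : ι → Prop}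
    [DecidablePred P] {f : ι → M} (hf : ∀ i, ¬P i → f i = 0) :
    ∑ i : Subtype P, f i = ∑ i, f i := by
  rw [← Fintype.sum_subtype_add_sum_subtype P f,
    Fintype.sum_eq_zero (fun i : {i // ¬P i} ↦ f i) fun i ↦ hf i i.2, add_zero]

theorem Function.Injective.sum_comp_extend_zero {α β γ δ : Type*} [Fintype α] [Fintype β]
    [Zero γ] [AddCommMonoid δ] {e : α → β} (he : Injective e) (f : α → γ) {g : γ → δ}
    (hg : g 0 = 0) : ∑ b, g (extend e f 0 b) = ∑ a, g (f a) := by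
  classical
  calc ∑ b, g (extend e f 0 b) = ∑ b ∈ Finset.univ.image e, g (extend e f 0 b) := by
        refine (Finset.sum_subset (Finset.subset_univ _) fun b _ hb ↦ ?_).symm
        rw [extend_apply' _ _ _ (by simpa using hb), Pi.zero_apply, hg]
    _ = ∑ a, g (f a) := by
        rw [Finset.sum_image fun a _ a' _ h ↦ he h]
        simp only [he.extend_apply]

theorem EuclideanSpace.norm_toLp_eq_sqrt {n : Type*} [Fintype n] (x : n → ℝ) :
    ‖toLp 2 x‖ = √(∑ i, x i ^ 2) := by
  simp [EuclideanSpace.norm_eq]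

theorem Matrix.mul_eq_sum_vecMulVec {R l m n : Type*} [Fintype m] [NonUnitalNonAssocSemiring R]
    (Φ : Matrix l m R) (A : Matrix m n R) : Φ * A = ∑ i, vecMulVec (Φᵀ i) (A i) := by
  ext j k
  simp [mul_apply, vecMulVec_apply, Matrix.sum_apply]

section

variable {p K M : ℕ}

theorem sum_dotProduct_mul_mulVec_le {ι : Type*} [Fintype ι] {u : ι → EuclideanSpace ℝ (Fin p)}
    {v : ι → EuclideanSpace ℝ (Fin K)} (hu : Orthonormal ℝ u) (hv : Orthonormal ℝ v)
    (Φ : Matrix (Fin p) (Fin M) ℝ) (A : Matrix (Fin M) (Fin K) ℝ) :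
    ∑ i, ofLp (u i) ⬝ᵥ ((Φ * A) *ᵥ ofLp (v i)) ≤ ∑ m, ‖toLp 2 (Φᵀ m)‖ * ‖toLp 2 (A m)‖ := by
  have expand : ∀ i, ofLp (u i) ⬝ᵥ ((Φ * A) *ᵥ ofLp (v i)) =
      ∑ m, ⟪u i, toLp 2 (Φᵀ m)⟫_ℝ * ⟪v i, toLp 2 (A m)⟫_ℝ := by
    intro i
    rw [← mulVec_mulVec, dotProduct_mulVec, dotProduct]
    refine Finset.sum_congr rfl fun m _ ↦ ?_
    simp only [EuclideanSpace.inner_eq_star_dotProduct, star_trivial]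
    rw [dotProduct_comm (Φᵀ m)]
    rfl
  simp_rw [expand]
  rw [Finset.sum_comm]
  exact Finset.sum_le_sum fun m _ ↦ hu.sum_inner_mul_inner_le hv _ _

theorem ofReal_sum_dotProduct_mulVec_le_psiL2 {ι : Type*} [Fintype ι]
    {u : ι → EuclideanSpace ℝ (Fin p)} {v : ι → EuclideanSpace ℝ (Fin K)} (hu : Orthonormal ℝ u)
    (hv : Orthonormal ℝ v) (X : Matrix (Fin p) (Fin K) ℝ) :
    ENNReal.ofReal (∑ i, ofLp (u i) ⬝ᵥ (X *ᵥ ofLp (v i))) ≤ psiL2 p K M X := by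
  refine le_iInf₂ fun Φ A ↦ le_iInf fun hX ↦ ENNReal.ofReal_le_ofReal ?_
  subst hX
  simpa only [EuclideanSpace.norm_toLp_eq_sqrt, transpose_apply] using
    sum_dotProduct_mul_mulVec_le hu hv Φ A

theorem psiL2_le_of_sum_vecMulVec {ι : Type*} [Fintype ι] (hι : Fintype.card ι ≤ M)
    (a : ι → Fin p → ℝ) (b : ι → Fin K → ℝ) :
    psiL2 p K M (∑ i, vecMulVec (a i) (b i)) ≤
      ENNReal.ofReal (∑ i, ‖toLp 2 (a i)‖ * ‖toLp 2 (b i)‖) := by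
  obtain ⟨e⟩ : Nonempty (ι ↪ Fin M) := Function.Embedding.nonempty_of_card_le (by simpa using hι)
  set c := Function.extend e (fun i ↦ (a i, b i)) 0
  refine iInf₂_le_of_le (of fun j m ↦ (c m).1 j) (of fun m ↦ (c m).2) (iInf_le_of_le ?_ ?_)
  · rw [mul_eq_sum_vecMulVec]
    exact e.injective.sum_comp_extend_zero _
      (g := fun x : (Fin p → ℝ) × (Fin K → ℝ) ↦ vecMulVec x.1 x.2) (by simp)
  · simp_rw [← EuclideanSpace.norm_toLp_eq_sqrt]
    exact ENNReal.ofReal_le_ofReal (e.injective.sum_comp_extend_zero _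
      (g := fun x : (Fin p → ℝ) × (Fin K → ℝ) ↦ ‖toLp 2 x.1‖ * ‖toLp 2 x.2‖) (by simp)).le

theorem Matrix.IsHermitian.sum_vecMulVec_eigenvectorBasis {𝕜 n : Type*} [RCLike 𝕜] [Fintype n]
    [DecidableEq n] {A : Matrix n n 𝕜} (hA : A.IsHermitian) :
    ∑ i, vecMulVec ⇑(hA.eigenvectorBasis i) (star ⇑(hA.eigenvectorBasis i)) = 1 := by
  rw [← Unitary.coe_mul_star_self hA.eigenvectorUnitary, mul_eq_sum_vecMulVec]
  rfl

section SquareRoot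

variable {X : Matrix (Fin p) (Fin K) ℝ} {S : Matrix (Fin K) (Fin K) ℝ} (hS : S.PosSemidef)
  (hSsq : S * S = Xᵀ * X)
include hSsq

theorem dotProduct_mulVec_eigenvectorBasis (i j : Fin K) :
    (X *ᵥ hS.1.eigenvectorBasis i) ⬝ᵥ (X *ᵥ hS.1.eigenvectorBasis j) =
      if i = j then hS.1.eigenvalues i ^ 2 else 0 := by
  set v := hS.1.eigenvectorBasis
  set σ := hS.1.eigenvalues
  have hXX : (Xᵀ * X) *ᵥ v j = σ j ^ 2 • ⇑(v j) := by
    rw [← hSsq, ← mulVec_mulVec, hS.1.mulVec_eigenvectorBasis, mulVec_smul,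
      hS.1.mulVec_eigenvectorBasis, smul_smul, sq]
  calc (X *ᵥ v i) ⬝ᵥ (X *ᵥ v j) = v i ⬝ᵥ ((Xᵀ * X) *ᵥ v j) := by
        rw [← mulVec_mulVec, dotProduct_mulVec (ofLp (v i)), vecMul_transpose]
    _ = σ j ^ 2 * ⟪v j, v i⟫_ℝ := by
        rw [hXX, dotProduct_smul, smul_eq_mul, EuclideanSpace.inner_eq_star_dotProduct,
          star_trivial]
    _ = if i = j then σ i ^ 2 else 0 := by
        rw [orthonormal_iff_ite.mp v.orthonormal]
        by_cases h : i = j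
        · simp [h]
        · simp [h, Ne.symm h]

theorem norm_toLp_mulVec_eigenvectorBasis (i : Fin K) :
    ‖toLp 2 (X *ᵥ hS.1.eigenvectorBasis i)‖ = hS.1.eigenvalues i := by
  rw [norm_eq_sqrt_real_inner, EuclideanSpace.inner_toLp_toLp, star_trivial,
    dotProduct_mulVec_eigenvectorBasis hS hSsq, if_pos rfl, Real.sqrt_sq (hS.eigenvalues_nonneg i)]

theorem mulVec_eigenvectorBasis_eq_zero {i : Fin K} (hi : hS.1.eigenvalues i = 0) :
    X *ᵥ hS.1.eigenvectorBasis i = 0 :=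
  dotProduct_self_eq_zero.mp <| by
    rw [dotProduct_mulVec_eigenvectorBasis hS hSsq, if_pos rfl, hi, sq, mul_zero]

theorem dotProduct_inv_smul_mulVec_eigenvectorBasis (i : Fin K) :
    ((hS.1.eigenvalues i)⁻¹ • (X *ᵥ hS.1.eigenvectorBasis i)) ⬝ᵥ (X *ᵥ hS.1.eigenvectorBasis i) =
      hS.1.eigenvalues i := by
  rw [smul_dotProduct, dotProduct_mulVec_eigenvectorBasis hS hSsq, if_pos rfl, smul_eq_mul]
  by_cases hi : hS.1.eigenvalues i = 0
  · simp [hi]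
  · field_simp

theorem orthonormal_inv_smul_mulVec_eigenvectorBasis :
    Orthonormal ℝ fun i : {i // hS.1.eigenvalues i ≠ 0} ↦
      (hS.1.eigenvalues i)⁻¹ • toLp 2 (X *ᵥ hS.1.eigenvectorBasis i) := by
  rw [orthonormal_iff_ite]
  rintro ⟨i, hi⟩ ⟨j, hj⟩
  rw [real_inner_smul_left, real_inner_smul_right, EuclideanSpace.inner_toLp_toLp, star_trivial,
    dotProduct_mulVec_eigenvectorBasis hS hSsq]
  by_cases hij : j = i
  · subst hij
    rw [if_pos rfl, if_pos rfl]
    field_simp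
  · simp [hij, Ne.symm hij]

theorem sum_vecMulVec_mulVec_eigenvectorBasis :
    ∑ i : {i // hS.1.eigenvalues i ≠ 0},
      vecMulVec (X *ᵥ hS.1.eigenvectorBasis i) (hS.1.eigenvectorBasis i) = X := by
  rw [Fintype.sum_subtype_eq_sum
    (f := fun i ↦ vecMulVec (X *ᵥ hS.1.eigenvectorBasis i) (hS.1.eigenvectorBasis i)) fun i hi ↦ by
    rw [mulVec_eigenvectorBasis_eq_zero hS hSsq (not_not.mp hi), zero_vecMulVec]]
  conv_rhs => rw [← Matrix.mul_one X, ← hS.1.sum_vecMulVec_eigenvectorBasis, Matrix.mul_sum]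
  simp only [mul_vecMulVec, star_trivial]

theorem card_eigenvalues_ne_zero_le :
    Fintype.card {i // hS.1.eigenvalues i ≠ 0} ≤ min p K :=
  le_min
    ((orthonormal_inv_smul_mulVec_eigenvectorBasis hS hSsq).linearIndependent
      |>.fintype_card_le_finrank.trans_eq finrank_euclideanSpace_fin)
    ((Fintype.card_subtype_le _).trans_eq (Fintype.card_fin K))

end SquareRoot

end

/-- If both `n_Φ` and `n_A` are the Euclidean norms, then for every `M ≥ min(p, K)`,
`ψ^M(X)` equals the nuclear norm `trace(√(XᵀX))`, where `S = √(XᵀX)` is the (unique)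
positive semidefinite square root of the positive semidefinite matrix `XᵀX`. -/
theorem psiL2_eq_nuclearNorm (p K M : ℕ) (hM : min p K ≤ M)
    (X : Matrix (Fin p) (Fin K) ℝ)
    (S : Matrix (Fin K) (Fin K) ℝ) (hS : S.PosSemidef) (hSsq : S * S = Xᵀ * X) :
    psiL2 p K M X = ENNReal.ofReal S.trace := by
  set σ := hS.1.eigenvalues
  set v := hS.1.eigenvectorBasis
  have htrace : S.trace = ∑ i : {i // σ i ≠ 0}, σ i := by
    rw [hS.1.trace_eq_sum_eigenvalues, Fintype.sum_subtype_eq_sum fun i hi ↦ not_not.mp hi]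
    rfl
  apply le_antisymm
  · calc psiL2 p K M X
        = psiL2 p K M (∑ i : {i // σ i ≠ 0}, vecMulVec (X *ᵥ v i) (v i)) := by
          rw [sum_vecMulVec_mulVec_eigenvectorBasis hS hSsq]
      _ ≤ ENNReal.ofReal (∑ i : {i // σ i ≠ 0}, ‖toLp 2 (X *ᵥ v i)‖ * ‖toLp 2 (ofLp (v i))‖) :=
          psiL2_le_of_sum_vecMulVec ((card_eigenvalues_ne_zero_le hS hSsq).trans hM) _ _
      _ = ENNReal.ofReal S.trace := by
          simp only [σ, v, norm_toLp_mulVec_eigenvectorBasis hS hSsq, toLp_ofLp, v.orthonormal.1,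
            mul_one, htrace]
  · calc ENNReal.ofReal S.trace
        = ENNReal.ofReal (∑ i : {i // σ i ≠ 0},
            ofLp ((σ i)⁻¹ • toLp 2 (X *ᵥ v i)) ⬝ᵥ (X *ᵥ ofLp (v i))) := by
          simp only [σ, v, ofLp_smul, dotProduct_inv_smul_mulVec_eigenvectorBasis hS hSsq,
            htrace]
      _ ≤ psiL2 p K M X :=
          ofReal_sum_dotProduct_mulVec_le_psiL2
            (orthonormal_inv_smul_mulVec_eigenvectorBasis hS hSsq)
            (v.orthonormal.comp _ Subtype.val_injective) X
end

section
/- (Corollary 1, instantiated for norms) Let E be a finite-dimensional real inner product space, ω a norm on E with dual norm ω*(z) = sup{⟨z, x⟩ : ω(x) ≤ 1}, s > 0 and y ∈ E. Let q be the unique point of B* = {z ∈ E : ω*(z) ≤ 1} minimizing ‖y − ·‖ over B*, and let m be the unique global minimizer of x ↦ (1/2)·‖x − y/s‖² + (1/s)·ω(x) on E. Then y = q + s • m. -/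
/-!
Put `p := y - s • m`. Optimality of `m` says that `p` is a subgradient of `ω` at `m`,
`⟪p, x - m⟫ ≤ ω x - ω m`, and positive homogeneity turns this into `⟪p, m⟫ = ω m` together with
`⟪p, ·⟫ ≤ ω`, i.e. `p ∈ B*`. For every `z ∈ B*` then `⟪y - p, z - p⟫ = s (⟪z, m⟫ - ω m) ≤ 0`, so
`p` is the projection of `y` onto `B*`, and the projection is unique.
-/

open scoped RealInnerProductSpace
open Set Filter Topology

section NormedSpace

variable {E : Type*} [NormedAddCommGroup E] [NormedSpace ℝ E] [FiniteDimensional ℝ E]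

theorem Seminorm.exists_pos_mul_norm_le (p : Seminorm ℝ E) (hp : ∀ x, p x = 0 → x = 0) :
    ∃ c > 0, ∀ x, c * ‖x‖ ≤ p x := by
  rcases subsingleton_or_nontrivial E with hE | hE
  · exact ⟨1, one_pos, fun x => by simp [Subsingleton.elim x 0]⟩
  have hcont : Continuous p := by
    simpa [continuousOn_univ] using p.convexOn.continuousOn_interior
  obtain ⟨u, hu, hmin⟩ := (isCompact_sphere (0 : E) 1).exists_isMinOn
    (NormedSpace.sphere_nonempty.2 zero_le_one) hcont.continuousOn
  have hu0 : u ≠ 0 := ne_zero_of_mem_unit_sphere ⟨u, hu⟩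
  refine ⟨p u, (apply_nonneg p u).lt_of_ne' (mt (hp u) hu0), fun x => ?_⟩
  rcases eq_or_ne x 0 with rfl | hx
  · simp
  have hle : p u ≤ p (‖x‖⁻¹ • x) := hmin (by simp [norm_smul, hx])
  rw [map_smul_eq_mul, norm_inv, norm_norm] at hle
  calc p u * ‖x‖ ≤ ‖x‖⁻¹ * p x * ‖x‖ := by gcongr
    _ = p x := by field_simp

end NormedSpace

section InnerProductSpace

variable {E : Type*} [NormedAddCommGroup E] [InnerProductSpace ℝ E]

/-- `m = prox_f a`. -/
def IsProxPoint (f : E → ℝ) (a m : E) : Prop :=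
  ∀ x, (1 / 2) * ‖m - a‖ ^ 2 + f m ≤ (1 / 2) * ‖x - a‖ ^ 2 + f x

theorem IsProxPoint.inner_sub_le_sub {f : E → ℝ} (hf : ConvexOn ℝ univ f) {a m : E}
    (hm : IsProxPoint f a m) (x : E) : ⟪a - m, x - m⟫ ≤ f x - f m := by
  set A := ⟪m - a, x - m⟫ + (f x - f m)
  have hA : ∀ t ∈ Ioc (0 : ℝ) 1, 0 ≤ A + t / 2 * ‖x - m‖ ^ 2 := by
    rintro t ⟨ht0, ht1⟩
    have hconv : f ((1 - t) • m + t • x) ≤ (1 - t) * f m + t * f x :=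
      hf.2 (mem_univ _) (mem_univ _) (by linarith) ht0.le (by ring)
    have hpt : (1 - t) • m + t • x - a = (m - a) + t • (x - m) := by
      simp only [sub_smul, one_smul, smul_sub]; abel
    have hmin := hm ((1 - t) • m + t • x)
    rw [hpt, norm_add_sq_real, real_inner_smul_right, norm_smul, Real.norm_eq_abs, mul_pow,
      sq_abs] at hmin
    have : 0 ≤ t * (A + t / 2 * ‖x - m‖ ^ 2) := by nlinarith
    exact nonneg_of_mul_nonneg_right this ht0
  have hlim : Tendsto (fun t : ℝ => A + t / 2 * ‖x - m‖ ^ 2) (𝓝[>] 0) (𝓝 A) := by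
    have : Continuous (fun t : ℝ => A + t / 2 * ‖x - m‖ ^ 2) := by fun_prop
    simpa using this.continuousWithinAt (s := Ioi 0) (x := 0) |>.tendsto
  have := ge_of_tendsto hlim (eventually_of_mem (Ioc_mem_nhdsGT one_pos) hA)
  rw [← neg_sub m a, inner_neg_left]
  linarith

theorem Seminorm.inner_eq_of_inner_sub_le (p : Seminorm ℝ E) {v m : E}
    (h : ∀ x, ⟪v, x - m⟫ ≤ p x - p m) : ⟪v, m⟫ = p m := by
  have h₀ := h 0
  have h₂ := h ((2 : ℝ) • m)
  rw [zero_sub, inner_neg_right, map_zero] at h₀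
  rw [two_smul, add_sub_cancel_right, ← two_smul ℝ m, map_smul_eq_mul, Real.norm_two] at h₂
  linarith

theorem Seminorm.inner_le_of_inner_sub_le (p : Seminorm ℝ E) {v m : E}
    (h : ∀ x, ⟪v, x - m⟫ ≤ p x - p m) (x : E) : ⟪v, x⟫ ≤ p x := by
  have := h x
  rw [inner_sub_right, p.inner_eq_of_inner_sub_le h] at this
  linarith

/-- Definiteness and finite dimension make the image bounded above, so the `sSup` is not the
junk value `0`. -/
theorem Seminorm.sSup_inner_le_one_iff [FiniteDimensional ℝ E] (p : Seminorm ℝ E)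
    (hp : ∀ x, p x = 0 → x = 0) (z : E) :
    sSup ((fun x => ⟪z, x⟫) '' {x | p x ≤ 1}) ≤ 1 ↔ ∀ x, ⟪z, x⟫ ≤ p x := by
  refine ⟨fun hz x => ?_, fun hz => Real.sSup_le ?_ zero_le_one⟩
  · obtain ⟨c, hc, hcp⟩ := p.exists_pos_mul_norm_le hp
    have hbdd : BddAbove ((fun x => ⟪z, x⟫) '' {x | p x ≤ 1}) := by
      refine ⟨‖z‖ * c⁻¹, ?_⟩
      rintro _ ⟨x, hx, rfl⟩
      have hx' : ‖x‖ ≤ c⁻¹ := by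
        rw [← mul_one c⁻¹, le_inv_mul_iff₀ hc]
        exact (hcp x).trans hx
      exact (real_inner_le_norm z x).trans (by gcongr)
    rcases (apply_nonneg p x).eq_or_lt with hx | hx
    · simp [hp x hx.symm]
    have hmem : p ((p x)⁻¹ • x) ≤ 1 := by
      rw [map_smul_eq_mul, Real.norm_eq_abs, abs_inv, abs_of_pos hx, inv_mul_cancel₀ hx.ne']
    have : ⟪z, (p x)⁻¹ • x⟫ ≤ 1 := (le_csSup hbdd ⟨_, hmem, rfl⟩).trans hz
    rwa [real_inner_smul_right, inv_mul_le_iff₀ hx, mul_one] at this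
  · rintro _ ⟨x, hx, rfl⟩
    exact (hz x).trans hx

theorem eq_of_inner_sub_nonpos_of_norm_sub_le {y p q : E} (h : ⟪y - p, q - p⟫ ≤ 0)
    (hq : ‖y - q‖ ≤ ‖y - p‖) : q = p := by
  have hsq : ‖y - q‖ ^ 2 = ‖y - p‖ ^ 2 - 2 * ⟪y - p, q - p⟫ + ‖q - p‖ ^ 2 := by
    rw [← norm_sub_sq_real, sub_sub_sub_cancel_right]
  have : ‖q - p‖ ^ 2 ≤ 0 := by nlinarith [norm_nonneg (y - q)]
  rw [← sub_eq_zero, ← norm_eq_zero]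
  exact pow_eq_zero_iff two_ne_zero |>.1 (le_antisymm this (sq_nonneg _))

end InnerProductSpace

/-- (Corollary 1 instantiated for norms: `y = prox_{sω*}(y) + s·prox_{ω/s}(y/s)`)
Let `ω` be a norm on the finite-dimensional real inner product space `E` with dual norm
`ω*(z) = sup {⟪z, x⟫ : ω(x) ≤ 1}`, let `s > 0` and `y ∈ E`. If `q` is the (unique) point of
the unit dual-norm ball `B* = {z : ω*(z) ≤ 1}` minimizing `‖y − ·‖` over `B*`, and `m` is
the (unique) global minimizer of `x ↦ (1/2)·‖x − y/s‖² + (1/s)·ω(x)`, then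
`y = q + s • m`. -/
theorem moreau_decomposition_norm {E : Type*} [NormedAddCommGroup E]
    [InnerProductSpace ℝ E] [FiniteDimensional ℝ E]
    (ω : E → ℝ)
    (hω_add : ∀ x y, ω (x + y) ≤ ω x + ω y)
    (hω_smul : ∀ (c : ℝ) (x), ω (c • x) = |c| * ω x)
    (hω_def : ∀ x, ω x = 0 ↔ x = 0)
    (ωd : E → ℝ)
    (hωd : ∀ z, ωd z = sSup ((fun x => ⟪z, x⟫) '' {x : E | ω x ≤ 1}))
    (s : ℝ) (hs : 0 < s) (y : E) (q m : E)
    (hq_mem : ωd q ≤ 1)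
    (hq_min : ∀ z : E, ωd z ≤ 1 → ‖y - q‖ ≤ ‖y - z‖)
    (hm_min : ∀ x : E,
      (1 / 2) * ‖m - s⁻¹ • y‖ ^ 2 + s⁻¹ * ω m ≤ (1 / 2) * ‖x - s⁻¹ • y‖ ^ 2 + s⁻¹ * ω x) :
    y = q + s • m := by
  let ν : Seminorm ℝ E := .of ω hω_add hω_smul
  have hB : ∀ z, ωd z ≤ 1 ↔ ∀ x, ⟪z, x⟫ ≤ ω x := fun z => by
    rw [hωd]
    exact ν.sSup_inner_le_one_iff (fun x => (hω_def x).1) z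
  have hm : IsProxPoint (s⁻¹ • ⇑ν) (s⁻¹ • y) m := hm_min
  set p := y - s • m
  have hsub : ∀ x, ⟪p, x - m⟫ ≤ ν x - ν m := fun x => by
    have h := hm.inner_sub_le_sub (ν.convexOn.smul (inv_nonneg.2 hs.le)) x
    have hps : p = s • (s⁻¹ • y - m) := by rw [smul_sub, smul_inv_smul₀ hs.ne']
    simp only [smul_eq_mul] at h
    rw [hps, real_inner_smul_left]
    calc s * _ ≤ s * (s⁻¹ * ν x - s⁻¹ * ν m) := by gcongr
      _ = ν x - ν m := by field_simp
  have hproj : ⟪y - p, q - p⟫ ≤ 0 := by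
    have hqm : ⟪q, m⟫ ≤ ⟪p, m⟫ :=
      ((hB q).1 hq_mem m).trans (ν.inner_eq_of_inner_sub_le hsub).ge
    rw [sub_sub_cancel, real_inner_smul_left, inner_sub_right, real_inner_comm q m,
      real_inner_comm p m]
    exact mul_nonpos_of_nonneg_of_nonpos hs.le (sub_nonpos.2 hqm)
  have hpq := eq_of_inner_sub_nonpos_of_norm_sub_le hproj
    (hq_min p ((hB p).2 (ν.inner_le_of_inner_sub_le hsub)))
  rw [hpq, sub_add_cancel]
end

section
/- (Projection onto the ℓ1 ball) Let y ∈ ℝⁿ and s > 0 with ‖y‖₁ > s. Then there exists a unique θ > 0 such that Σ_{i=1}^n max(|y_i| − θ, 0) = s, and the vector x* defined componentwise by x*_i = sign(y_i)·max(|y_i| − θ, 0) is the unique point of the ℓ1 ball {z ∈ ℝⁿ : ‖z‖₁ ≤ s} minimizing the Euclidean distance to y. -/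
/-!
The map `θ ↦ ∑ᵢ max (|yᵢ| - θ) 0` is continuous, equals `‖y‖₁ > s` at `0`, vanishes at `‖y‖₁`,
and is strictly decreasing wherever it is positive; the intermediate value theorem gives `θ`.
The soft-thresholded `x` has `‖x‖₁ = s`, `(yᵢ - xᵢ) xᵢ = θ |xᵢ|` and `|yᵢ - xᵢ| ≤ θ`,
so every `z` in the ball satisfies `⟪y - x, z - x⟫ ≤ θ (‖z‖₁ - s) ≤ 0`.
This obtuse-angle condition yields `‖y - x‖² + ‖z - x‖² ≤ ‖y - z‖²`, i.e. minimality and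
uniqueness at once.
-/

open RealInnerProductSpace

noncomputable def softThreshold (θ t : ℝ) : ℝ := Real.sign t * max (|t| - θ) 0

section SoftThreshold

variable {θ t : ℝ}

lemma softThreshold_of_abs_le (h : |t| ≤ θ) : softThreshold θ t = 0 := by
  simp [softThreshold, max_eq_right (sub_nonpos.mpr h)]

lemma softThreshold_of_lt_abs (h : θ < |t|) : softThreshold θ t = t - θ * Real.sign t := by
  rw [softThreshold, max_eq_left (sub_nonneg.mpr h.le)]
  rcases lt_trichotomy t 0 with ht | rfl | ht
  · rw [Real.sign_of_neg ht, abs_of_neg ht]; ring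
  · simp
  · rw [Real.sign_of_pos ht, abs_of_pos ht]; ring

lemma abs_sign_of_lt_abs (hθ : 0 ≤ θ) (h : θ < |t|) : |Real.sign t| = 1 := by
  rcases Real.sign_apply_eq_of_ne_zero t (abs_pos.mp (hθ.trans_lt h)) with h | h <;> simp [h]

lemma abs_softThreshold (hθ : 0 ≤ θ) : |softThreshold θ t| = max (|t| - θ) 0 := by
  rcases le_or_gt |t| θ with h | h
  · rw [softThreshold_of_abs_le h, abs_zero, max_eq_right (sub_nonpos.mpr h)]
  · rw [softThreshold, abs_mul, abs_sign_of_lt_abs hθ h, one_mul,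
      abs_of_nonneg (le_max_right _ _)]

lemma abs_sub_softThreshold_le (hθ : 0 ≤ θ) : |t - softThreshold θ t| ≤ θ := by
  rcases le_or_gt |t| θ with h | h
  · rwa [softThreshold_of_abs_le h, sub_zero]
  · rw [softThreshold_of_lt_abs h, sub_sub_cancel, abs_mul, abs_sign_of_lt_abs hθ h,
      abs_of_nonneg hθ, mul_one]

lemma sub_softThreshold_mul_self (hθ : 0 ≤ θ) :
    (t - softThreshold θ t) * softThreshold θ t = θ * |softThreshold θ t| := by
  rcases le_or_gt |t| θ with h | h
  · simp [softThreshold_of_abs_le h]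
  · rw [abs_softThreshold hθ, max_eq_left (sub_nonneg.mpr h.le)]
    nth_rw 1 [softThreshold_of_lt_abs h, sub_sub_cancel]
    rw [softThreshold, max_eq_left (sub_nonneg.mpr h.le)]
    have hsign : Real.sign t * Real.sign t = 1 := by
      rw [← abs_mul_abs_self, abs_sign_of_lt_abs hθ h, mul_one]
    linear_combination θ * (|t| - θ) * hsign

end SoftThreshold

section Threshold

variable {ι : Type*} [Fintype ι] (a : ι → ℝ)

lemma continuous_sum_max_sub : Continuous fun θ : ℝ => ∑ i, max (a i - θ) 0 := by
  fun_prop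

lemma sum_max_sub_lt_of_lt {θ₁ θ₂ : ℝ} (hθ : θ₁ < θ₂) (hpos : 0 < ∑ i, max (a i - θ₁) 0) :
    ∑ i, max (a i - θ₂) 0 < ∑ i, max (a i - θ₁) 0 := by
  obtain ⟨i, -, hi⟩ := Finset.exists_lt_of_sum_lt (Finset.sum_const_zero.trans_lt hpos)
  refine Finset.sum_lt_sum (fun j _ => max_le_max (by linarith) le_rfl)
    ⟨i, Finset.mem_univ i, ?_⟩
  exact max_lt ((sub_lt_sub_left hθ _).trans_le (le_max_left _ _)) hi

lemma eq_of_sum_max_sub_eq {θ₁ θ₂ : ℝ} (hpos : 0 < ∑ i, max (a i - θ₁) 0)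
    (heq : ∑ i, max (a i - θ₁) 0 = ∑ i, max (a i - θ₂) 0) : θ₁ = θ₂ := by
  rcases lt_trichotomy θ₁ θ₂ with h | h | h
  · exact absurd heq (sum_max_sub_lt_of_lt a h hpos).ne'
  · exact h
  · exact absurd heq (sum_max_sub_lt_of_lt a h (heq ▸ hpos)).ne

lemma existsUnique_sum_max_sub_eq (ha : ∀ i, 0 ≤ a i) {s : ℝ} (hs : 0 < s)
    (hsa : s < ∑ i, a i) : ∃! θ : ℝ, 0 < θ ∧ ∑ i, max (a i - θ) 0 = s := by
  have hzero : ∑ i, max (a i - 0) 0 = ∑ i, a i := by simp [max_eq_left (ha _)]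
  have htop : ∑ i, max (a i - ∑ j, a j) 0 = 0 :=
    Finset.sum_eq_zero fun i _ => max_eq_right
      (sub_nonpos.mpr (Finset.single_le_sum (fun j _ => ha j) (Finset.mem_univ i)))
  obtain ⟨θ, hθ, hθs⟩ := intermediate_value_Icc' (hs.trans hsa).le
    (continuous_sum_max_sub a).continuousOn ⟨htop.symm ▸ hs.le, hzero.symm ▸ hsa.le⟩
  have hθpos : 0 < θ := hθ.1.lt_of_ne (by rintro rfl; exact hsa.ne' (hzero ▸ hθs))
  refine ⟨θ, ⟨hθpos, hθs⟩, fun θ' ⟨_, hθ's⟩ => ?_⟩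
  exact eq_of_sum_max_sub_eq a (hθ's ▸ hs) (hθ's.trans hθs.symm)

end Threshold

lemma sq_norm_sub_add_sq_norm_sub_le {F : Type*} [NormedAddCommGroup F]
    [InnerProductSpace ℝ F] {x y z : F} (h : ⟪y - x, z - x⟫ ≤ 0) :
    ‖y - x‖ ^ 2 + ‖z - x‖ ^ 2 ≤ ‖y - z‖ ^ 2 := by
  have : y - z = (y - x) - (z - x) := by abel
  rw [this, norm_sub_sq_real (x := y - x)]
  linarith

lemma inner_sub_softThreshold_nonpos {ι : Type*} [Fintype ι] {θ s : ℝ} (hθ : 0 ≤ θ)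
    {y x z : EuclideanSpace ℝ ι} (hx : ∀ i, x i = softThreshold θ (y i))
    (hxs : ∑ i, |x i| = s) (hz : ∑ i, |z i| ≤ s) : ⟪y - x, z - x⟫ ≤ 0 := by
  have hterm : ∀ i, (z i - x i) * (y i - x i) ≤ θ * |z i| - θ * |x i| := fun i => by
    have hbound : (y i - x i) * z i ≤ θ * |z i| := calc
      (y i - x i) * z i ≤ |y i - x i| * |z i| := (le_abs_self _).trans (abs_mul _ _).le
      _ ≤ θ * |z i| := by gcongr; exact hx i ▸ abs_sub_softThreshold_le hθ
    have hself : (y i - x i) * x i = θ * |x i| := hx i ▸ sub_softThreshold_mul_self hθ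
    linarith
  calc ⟪y - x, z - x⟫ = ∑ i, (z i - x i) * (y i - x i) := by simp [PiLp.inner_apply]
    _ ≤ ∑ i, (θ * |z i| - θ * |x i|) := Finset.sum_le_sum fun i _ => hterm i
    _ = θ * (∑ i, |z i| - s) := by
      rw [Finset.sum_sub_distrib, ← Finset.mul_sum, ← Finset.mul_sum, hxs, mul_sub]
    _ ≤ 0 := mul_nonpos_of_nonneg_of_nonpos hθ (by linarith)

/-- (Projection onto the ℓ1 ball) Let `y ∈ ℝⁿ` and `s > 0` with `‖y‖₁ > s`. Then there is a
unique `θ > 0` with `∑ᵢ max(|y_i| − θ, 0) = s`, and the vector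
`x*_i = sign(y_i)·max(|y_i| − θ, 0)` is the unique point of the ℓ1 ball
`{z : ‖z‖₁ ≤ s}` minimizing the Euclidean distance to `y`. -/
theorem projection_onto_l1_ball (n : ℕ) (y : EuclideanSpace ℝ (Fin n))
    (s : ℝ) (hs : 0 < s) (hy : s < ∑ i, |y i|) :
    (∃! θ : ℝ, 0 < θ ∧ ∑ i, max (|y i| - θ) 0 = s) ∧
    (∀ θ : ℝ, 0 < θ → (∑ i, max (|y i| - θ) 0 = s) →
      ∀ xstar : EuclideanSpace ℝ (Fin n),
        (∀ i, xstar i = Real.sign (y i) * max (|y i| - θ) 0) →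
        (∑ i, |xstar i|) ≤ s ∧
        (∀ z : EuclideanSpace ℝ (Fin n), (∑ i, |z i|) ≤ s → ‖y - xstar‖ ≤ ‖y - z‖) ∧
        (∀ z : EuclideanSpace ℝ (Fin n), (∑ i, |z i|) ≤ s →
          (∀ w : EuclideanSpace ℝ (Fin n), (∑ i, |w i|) ≤ s → ‖y - z‖ ≤ ‖y - w‖) →
          z = xstar)) := by
  refine ⟨existsUnique_sum_max_sub_eq _ (fun i => abs_nonneg (y i)) hs hy, ?_⟩
  intro θ hθ hθs x hx
  have hxs : ∑ i, |x i| = s :=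
    (Finset.sum_congr rfl fun i _ => by rw [hx i]; exact abs_softThreshold hθ.le).trans hθs
  have hpyth : ∀ z : EuclideanSpace ℝ (Fin n), ∑ i, |z i| ≤ s →
      ‖y - x‖ ^ 2 + ‖z - x‖ ^ 2 ≤ ‖y - z‖ ^ 2 := fun z hz =>
    sq_norm_sub_add_sq_norm_sub_le (inner_sub_softThreshold_nonpos hθ.le hx hxs hz)
  refine ⟨hxs.le, fun z hz => ?_, fun z hz hmin => ?_⟩
  · refine (sq_le_sq₀ (norm_nonneg _) (norm_nonneg _)).mp ?_
    linarith [hpyth z hz, sq_nonneg ‖z - x‖]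
  · have hsq := pow_le_pow_left₀ (norm_nonneg _) (hmin x hxs.le) 2
    have hzx : ‖z - x‖ ^ 2 = 0 := le_antisymm (by linarith [hpyth z hz]) (sq_nonneg _)
    rwa [sq_eq_zero_iff, norm_eq_zero, sub_eq_zero] at hzx
end

section
/- (Prox composition with an additional ℓ2 term) Let H be a partition of {1, …, n} into nonempty groups, λ₁ > 0, λ∞ > 0, λ₂ > 0 and y ∈ ℝⁿ. Let u be the unique minimizer of x ↦ (1/2)·‖x − y‖₂² + λ₁·‖x‖₁ + λ∞·Σ_{g∈H} max_{i∈g} |x_i| on ℝⁿ, and define x* = 0 if ‖u‖₂ ≤ λ₂ and x* = (1 − λ₂/‖u‖₂)·u otherwise. Then x* is the unique minimizer of x ↦ (1/2)·‖x − y‖₂² + λ₁·‖x‖₁ + λ∞·Σ_{g∈H} max_{i∈g} |x_i| + λ₂·‖x‖₂ on ℝⁿ. -/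
/-!
Write `φ = λ₁‖·‖₁ + λ∞Ω`, a sublinear function. Optimality of `u` makes `y - u` a subgradient
of `φ` at `u`; by positive homogeneity it is then a subgradient at every `c • u` with `c ≥ 0`,
in particular at `x*`. Block soft thresholding is the prox of `λ₂‖·‖₂`, so `u - x*` is a
subgradient of `λ₂‖·‖₂` at `x*`. Hence `y - x*` is a subgradient of `φ + λ₂‖·‖₂` at `x*`, and
strong convexity of `½‖· - y‖²` shows the objective exceeds its value at `x*` by at least
`½‖x - x*‖²`, giving both minimality and uniqueness.
-/

open Set Filter Topology
open scoped RealInnerProductSpace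

lemma nonneg_of_forall_mem_Ioc_nonneg_add_mul {a b : ℝ} (h : ∀ t ∈ Ioc (0 : ℝ) 1, 0 ≤ a + t * b) :
    0 ≤ a := by
  have hlim : Tendsto (fun t : ℝ => a + t * b) (𝓝[>] 0) (𝓝 a) :=
    tendsto_nhdsWithin_of_tendsto_nhds
      ((by fun_prop : Continuous fun t : ℝ => a + t * b).tendsto' 0 a (by simp))
  exact ge_of_tendsto hlim (eventually_of_mem (Ioc_mem_nhdsGT one_pos) h)

section Subgradient

variable {E : Type*} [NormedAddCommGroup E] [InnerProductSpace ℝ E]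

def HasSubgradientAt (f : E → ℝ) (v x : E) : Prop :=
  ∀ z, f x + ⟪v, z - x⟫ ≤ f z

theorem HasSubgradientAt.add {f g : E → ℝ} {v w x : E} (hf : HasSubgradientAt f v x)
    (hg : HasSubgradientAt g w x) : HasSubgradientAt (fun z => f z + g z) (v + w) x := fun z => by
  rw [inner_add_left]
  linarith [hf z, hg z]

lemma half_norm_add_smul_sq (a b : E) (t : ℝ) :
    ‖a + t • b‖ ^ 2 / 2 = ‖a‖ ^ 2 / 2 + t * ⟪a, b⟫ + t ^ 2 * (‖b‖ ^ 2 / 2) := by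
  rw [norm_add_sq_real, inner_smul_right, norm_smul, mul_pow, Real.norm_eq_abs, sq_abs]; ring

/-- Compare `u` with `u + t • (x - u)` and let `t → 0⁺`. -/
theorem ConvexOn.hasSubgradientAt_of_forall_prox_le {f : E → ℝ} (hf : ConvexOn ℝ univ f) {y u : E}
    (hu : ∀ x, ‖u - y‖ ^ 2 / 2 + f u ≤ ‖x - y‖ ^ 2 / 2 + f x) : HasSubgradientAt f (y - u) u := by
  intro x
  suffices 0 ≤ f x - f u - ⟪y - u, x - u⟫ by linarith
  refine nonneg_of_forall_mem_Ioc_nonneg_add_mul (b := ‖x - u‖ ^ 2 / 2) fun t ⟨ht0, ht1⟩ => ?_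
  have hmin := hu (u + t • (x - u))
  have hconv : f (u + t • (x - u)) ≤ (1 - t) * f u + t * f x := by
    rw [show u + t • (x - u) = (1 - t) • u + t • x by module]
    exact hf.2 (mem_univ u) (mem_univ x) (sub_nonneg.2 ht1) ht0.le (sub_add_cancel 1 t)
  have hexp := half_norm_add_smul_sq (u - y) (x - u) t
  rw [show u + t • (x - u) - y = u - y + t • (x - u) by abel] at hmin
  rw [show ⟪u - y, x - u⟫ = -⟪y - u, x - u⟫ by rw [← inner_neg_left, neg_sub]] at hexp
  have : 0 ≤ t * ((f x - f u - ⟪y - u, x - u⟫) + t * (‖x - u‖ ^ 2 / 2)) := by nlinarith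
  exact nonneg_of_mul_nonneg_right this ht0

theorem HasSubgradientAt.prox_add_half_sq_le {f : E → ℝ} {x y : E}
    (h : HasSubgradientAt f (y - x) x) (z : E) :
    ‖x - y‖ ^ 2 / 2 + f x + ‖z - x‖ ^ 2 / 2 ≤ ‖z - y‖ ^ 2 / 2 + f z := by
  have hexp := half_norm_add_smul_sq (x - y) (z - x) 1
  rw [one_smul, sub_add_sub_cancel', one_mul, one_pow, one_mul] at hexp
  have hsub := h z
  rw [show ⟪y - x, z - x⟫ = -⟪x - y, z - x⟫ by rw [← inner_neg_left, neg_sub]] at hsub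
  linarith

end Subgradient

structure IsSublinear {E : Type*} [AddCommMonoid E] [Module ℝ E] (φ : E → ℝ) : Prop where
  add_le : ∀ x y, φ (x + y) ≤ φ x + φ y
  smul_of_nonneg : ∀ c : ℝ, 0 ≤ c → ∀ x, φ (c • x) = c * φ x

namespace IsSublinear

section Module

variable {E : Type*} [AddCommMonoid E] [Module ℝ E] {φ ψ : E → ℝ}

theorem map_zero (hφ : IsSublinear φ) : φ 0 = 0 := by
  simpa using hφ.smul_of_nonneg 0 le_rfl 0

theorem convexOn (hφ : IsSublinear φ) : ConvexOn ℝ univ φ :=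
  ⟨convex_univ, fun x _ y _ a b ha hb _ => by
    simpa only [hφ.smul_of_nonneg a ha, hφ.smul_of_nonneg b hb, smul_eq_mul] using
      hφ.add_le (a • x) (b • y)⟩

theorem add (hφ : IsSublinear φ) (hψ : IsSublinear ψ) : IsSublinear fun x => φ x + ψ x where
  add_le x y := by linarith [hφ.add_le x y, hψ.add_le x y]
  smul_of_nonneg c hc x := by rw [hφ.smul_of_nonneg c hc, hψ.smul_of_nonneg c hc, mul_add]

theorem const_mul (hφ : IsSublinear φ) {a : ℝ} (ha : 0 ≤ a) : IsSublinear fun x => a * φ x where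
  add_le x y := by rw [← mul_add]; exact mul_le_mul_of_nonneg_left (hφ.add_le x y) ha
  smul_of_nonneg c hc x := by rw [hφ.smul_of_nonneg c hc]; ring

theorem sum {ι : Type*} (s : Finset ι) {φ : ι → E → ℝ} (hφ : ∀ i ∈ s, IsSublinear (φ i)) :
    IsSublinear fun x => ∑ i ∈ s, φ i x where
  add_le x y := by
    rw [← Finset.sum_add_distrib]
    exact Finset.sum_le_sum fun i hi => (hφ i hi).add_le x y
  smul_of_nonneg c hc x := by
    rw [Finset.mul_sum]
    exact Finset.sum_congr rfl fun i hi => (hφ i hi).smul_of_nonneg c hc x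

theorem comp {F : Type*} [AddCommMonoid F] [Module ℝ F] (hφ : IsSublinear φ) (L : F →ₗ[ℝ] E) :
    IsSublinear fun x => φ (L x) where
  add_le x y := by rw [map_add]; exact hφ.add_le _ _
  smul_of_nonneg c hc x := by rw [map_smul]; exact hφ.smul_of_nonneg c hc _

end Module

variable {E : Type*} [NormedAddCommGroup E] [InnerProductSpace ℝ E] {φ : E → ℝ}

theorem hasSubgradientAt_smul (hφ : IsSublinear φ) {v u : E} (h : HasSubgradientAt φ v u)
    {c : ℝ} (hc : 0 ≤ c) : HasSubgradientAt φ v (c • u) := by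
  have hu : φ u = ⟪v, u⟫ := by
    have h0 := h 0
    have h2 := h ((2 : ℝ) • u)
    rw [hφ.map_zero, zero_sub, inner_neg_right] at h0
    rw [hφ.smul_of_nonneg 2 zero_le_two, show (2 : ℝ) • u - u = u by module] at h2
    linarith
  intro x
  have hx := h x
  rw [inner_sub_right] at hx ⊢
  rw [hφ.smul_of_nonneg c hc, real_inner_smul_right, hu]
  linarith

end IsSublinear

theorem isSublinear_abs_apply {ι : Type*} (i : ι) : IsSublinear fun x : ι → ℝ => |x i| where
  add_le x y := abs_add_le (x i) (y i)
  smul_of_nonneg c hc x := by simp [abs_mul, abs_of_nonneg hc]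

theorem isSublinear_sSup_abs_image {ι : Type*} {s : Set ι} (hs : s.Finite) :
    IsSublinear fun x : ι → ℝ => sSup ((fun i => |x i|) '' s) where
  add_le x y := by
    rcases s.eq_empty_or_nonempty with rfl | hne
    · simp
    have hbdd (z : ι → ℝ) : BddAbove ((fun i => |z i|) '' s) := (hs.image _).bddAbove
    refine csSup_le (hne.image _) ?_
    rintro _ ⟨i, hi, rfl⟩
    exact (abs_add_le _ _).trans
      (add_le_add (le_csSup (hbdd x) ⟨i, hi, rfl⟩) (le_csSup (hbdd y) ⟨i, hi, rfl⟩))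
  smul_of_nonneg c hc x := by
    rw [← smul_eq_mul, ← Real.sSup_smul_of_nonneg hc, ← Set.image_smul, Set.image_image]
    simp [abs_mul, abs_of_nonneg hc]

section BlockSoftThreshold

variable {E : Type*} [NormedAddCommGroup E] [InnerProductSpace ℝ E]

noncomputable def blockSoftThreshold (lam : ℝ) (u : E) : E :=
  if ‖u‖ ≤ lam then 0 else (1 - lam / ‖u‖) • u

theorem exists_nonneg_smul_eq_blockSoftThreshold (lam : ℝ) (u : E) :
    ∃ c : ℝ, 0 ≤ c ∧ blockSoftThreshold lam u = c • u := by
  unfold blockSoftThreshold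
  split_ifs with h
  · exact ⟨0, le_rfl, (zero_smul ℝ u).symm⟩
  · refine ⟨_, ?_, rfl⟩
    rcases (norm_nonneg u).eq_or_lt with h0 | h0
    · simp [← h0]
    · rw [sub_nonneg, div_le_one h0]
      exact (not_le.1 h).le

theorem hasSubgradientAt_blockSoftThreshold {lam : ℝ} (hlam : 0 ≤ lam) (u : E) :
    HasSubgradientAt (fun x => lam * ‖x‖) (u - blockSoftThreshold lam u)
      (blockSoftThreshold lam u) := by
  intro x
  have hcs := real_inner_le_norm u x
  unfold blockSoftThreshold
  split_ifs with h
  · simpa using hcs.trans (mul_le_mul_of_nonneg_right h (norm_nonneg x))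
  · dsimp only
    have hr : 0 < ‖u‖ := hlam.trans_lt (not_le.1 h)
    have hc : 0 ≤ 1 - lam / ‖u‖ := by
      rw [sub_nonneg, div_le_one hr]
      exact (not_le.1 h).le
    rw [show u - (1 - lam / ‖u‖) • u = (lam / ‖u‖) • u by module, real_inner_smul_left,
      inner_sub_right, real_inner_smul_right, real_inner_self_eq_norm_sq, norm_smul,
      Real.norm_of_nonneg hc]
    have := mul_le_mul_of_nonneg_left hcs (div_nonneg hlam hr.le)
    field_simp at this ⊢
    nlinarith

theorem IsSublinear.hasSubgradientAt_blockSoftThreshold_of_prox {φ : E → ℝ} (hφ : IsSublinear φ)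
    {lam : ℝ} (hlam : 0 ≤ lam) {y u : E}
    (hu : ∀ x, ‖u - y‖ ^ 2 / 2 + φ u ≤ ‖x - y‖ ^ 2 / 2 + φ x) :
    HasSubgradientAt (fun x => φ x + lam * ‖x‖) (y - blockSoftThreshold lam u)
      (blockSoftThreshold lam u) := by
  obtain ⟨c, hc, hcu⟩ := exists_nonneg_smul_eq_blockSoftThreshold lam u
  have hφu := hφ.hasSubgradientAt_smul (hφ.convexOn.hasSubgradientAt_of_forall_prox_le hu) hc
  rw [← hcu] at hφu
  simpa only [sub_add_sub_cancel] using hφu.add (hasSubgradientAt_blockSoftThreshold hlam u)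

end BlockSoftThreshold

theorem EuclideanSpace.norm_toLp_sq {ι : Type*} [Fintype ι] (x : ι → ℝ) :
    ‖WithLp.toLp 2 x‖ ^ 2 = ∑ i, x i ^ 2 :=
  EuclideanSpace.real_norm_sq_eq _

theorem EuclideanSpace.norm_toLp {ι : Type*} [Fintype ι] (x : ι → ℝ) :
    ‖WithLp.toLp 2 x‖ = √(∑ i, x i ^ 2) := by
  rw [← norm_toLp_sq, Real.sqrt_sq (norm_nonneg _)]

theorem prox_composition_with_l2_general (n : ℕ) (H : Finset (Finset (Fin n)))
    (lam1 laminf lam2 : ℝ) (h1 : 0 < lam1) (hinf : 0 < laminf) (h2 : 0 < lam2)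
    (Ω : (Fin n → ℝ) → ℝ)
    (hΩ : ∀ x, Ω x = ∑ g ∈ H, sSup ((fun i => |x i|) '' (g : Set (Fin n))))
    (y u xstar : Fin n → ℝ)
    (hu : ∀ x : Fin n → ℝ,
      (1 / 2) * (∑ i, (u i - y i) ^ 2) + lam1 * (∑ i, |u i|) + laminf * Ω u ≤
        (1 / 2) * (∑ i, (x i - y i) ^ 2) + lam1 * (∑ i, |x i|) + laminf * Ω x)
    (hxstar : xstar =
      if Real.sqrt (∑ i, (u i) ^ 2) ≤ lam2 then 0
      else (1 - lam2 / Real.sqrt (∑ i, (u i) ^ 2)) • u) :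
    (∀ x : Fin n → ℝ,
      (1 / 2) * (∑ i, (xstar i - y i) ^ 2) + lam1 * (∑ i, |xstar i|) + laminf * Ω xstar +
          lam2 * Real.sqrt (∑ i, (xstar i) ^ 2) ≤
        (1 / 2) * (∑ i, (x i - y i) ^ 2) + lam1 * (∑ i, |x i|) + laminf * Ω x +
          lam2 * Real.sqrt (∑ i, (x i) ^ 2)) ∧
    (∀ x : Fin n → ℝ,
      (∀ x' : Fin n → ℝ,
        (1 / 2) * (∑ i, (x i - y i) ^ 2) + lam1 * (∑ i, |x i|) + laminf * Ω x +
            lam2 * Real.sqrt (∑ i, (x i) ^ 2) ≤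
          (1 / 2) * (∑ i, (x' i - y i) ^ 2) + lam1 * (∑ i, |x' i|) + laminf * Ω x' +
            lam2 * Real.sqrt (∑ i, (x' i) ^ 2)) →
      x = xstar) := by
  have hΩ_sublinear : IsSublinear Ω := by
    rw [show Ω = _ from funext hΩ]
    exact IsSublinear.sum H fun g _ => isSublinear_sSup_abs_image g.finite_toSet
  have hφ : IsSublinear fun x : EuclideanSpace ℝ (Fin n) =>
      lam1 * ∑ i, |x.ofLp i| + laminf * Ω x.ofLp :=
    (((IsSublinear.sum Finset.univ fun i _ => isSublinear_abs_apply i).const_mul h1.le).add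
      (hΩ_sublinear.const_mul hinf.le)).comp (WithLp.linearEquiv 2 ℝ (Fin n → ℝ)).toLinearMap
  have hxstar_eq : WithLp.toLp 2 xstar = blockSoftThreshold lam2 (WithLp.toLp 2 u) := by
    rw [hxstar, blockSoftThreshold, EuclideanSpace.norm_toLp]
    split_ifs <;> rfl
  have hsub := hφ.hasSubgradientAt_blockSoftThreshold_of_prox h2.le (y := WithLp.toLp 2 y)
    (u := WithLp.toLp 2 u) <| (WithLp.toLp_surjective 2).forall.2 fun x => by
      simp only [← WithLp.toLp_sub, EuclideanSpace.norm_toLp_sq, Pi.sub_apply]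
      linarith [hu x]
  have key (x : Fin n → ℝ) := hsub.prox_add_half_sq_le (WithLp.toLp 2 x)
  rw [← hxstar_eq] at key
  simp only [← WithLp.toLp_sub, EuclideanSpace.norm_toLp_sq] at key
  simp only [EuclideanSpace.norm_toLp, Pi.sub_apply] at key
  refine ⟨fun x => ?_, fun x hx => ?_⟩
  · linarith [key x, Finset.sum_nonneg fun i (_ : i ∈ Finset.univ) => sq_nonneg (x i - xstar i)]
  · have hdist : ‖WithLp.toLp 2 (x - xstar)‖ ^ 2 ≤ 0 := by
      rw [EuclideanSpace.norm_toLp_sq]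
      simp only [Pi.sub_apply]
      linarith [key x, hx xstar]
    simpa [sub_eq_zero] using hdist

/-- (Prox composition with an additional ℓ2 term) Let `H` be a partition of `{1, …, n}`
into nonempty groups, `λ₁, λ∞, λ₂ > 0`, `y ∈ ℝⁿ`, and let `Ω` be the ℓ1/ℓ∞ group norm. If
`u` is the (unique) minimizer of `x ↦ (1/2)·‖x − y‖₂² + λ₁·‖x‖₁ + λ∞·Ω(x)` and
`x* = 0` if `‖u‖₂ ≤ λ₂`, `x* = (1 − λ₂/‖u‖₂)·u` otherwise (block soft thresholding of `u`),
then `x*` is the unique minimizer of `x ↦ (1/2)·‖x − y‖₂² + λ₁·‖x‖₁ + λ∞·Ω(x) + λ₂·‖x‖₂`. -/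
theorem prox_composition_with_l2 (n : ℕ) (H : Finset (Finset (Fin n)))
    (h_nonempty : ∀ g ∈ H, g.Nonempty)
    (h_disjoint : ∀ g ∈ H, ∀ g' ∈ H, g ≠ g' → Disjoint g g')
    (h_cover : ∀ i : Fin n, ∃ g ∈ H, i ∈ g)
    (lam1 laminf lam2 : ℝ) (h1 : 0 < lam1) (hinf : 0 < laminf) (h2 : 0 < lam2)
    (Ω : (Fin n → ℝ) → ℝ)
    (hΩ : ∀ x, Ω x = ∑ g ∈ H, sSup ((fun i => |x i|) '' (g : Set (Fin n))))
    (y u xstar : Fin n → ℝ)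
    (hu : ∀ x : Fin n → ℝ,
      (1 / 2) * (∑ i, (u i - y i) ^ 2) + lam1 * (∑ i, |u i|) + laminf * Ω u ≤
        (1 / 2) * (∑ i, (x i - y i) ^ 2) + lam1 * (∑ i, |x i|) + laminf * Ω x)
    (hxstar : xstar =
      if Real.sqrt (∑ i, (u i) ^ 2) ≤ lam2 then 0
      else (1 - lam2 / Real.sqrt (∑ i, (u i) ^ 2)) • u) :
    (∀ x : Fin n → ℝ,
      (1 / 2) * (∑ i, (xstar i - y i) ^ 2) + lam1 * (∑ i, |xstar i|) + laminf * Ω xstar +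
          lam2 * Real.sqrt (∑ i, (xstar i) ^ 2) ≤
        (1 / 2) * (∑ i, (x i - y i) ^ 2) + lam1 * (∑ i, |x i|) + laminf * Ω x +
          lam2 * Real.sqrt (∑ i, (x i) ^ 2)) ∧
    (∀ x : Fin n → ℝ,
      (∀ x' : Fin n → ℝ,
        (1 / 2) * (∑ i, (x i - y i) ^ 2) + lam1 * (∑ i, |x i|) + laminf * Ω x +
            lam2 * Real.sqrt (∑ i, (x i) ^ 2) ≤
          (1 / 2) * (∑ i, (x' i - y i) ^ 2) + lam1 * (∑ i, |x' i|) + laminf * Ω x' +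
            lam2 * Real.sqrt (∑ i, (x' i) ^ 2)) →
      x = xstar) :=
  prox_composition_with_l2_general n H lam1 laminf lam2 h1 hinf h2 Ω hΩ y u xstar hu hxstar
end

section
/- (Rank-deficient local minima of factorized convex programs are global) Let f : ℝ^{n×n} → ℝ be convex and twice continuously differentiable, and fix M ∈ ℕ. Suppose Q₀ ∈ ℝ^{n×M} is a local minimizer of the function Q ↦ f(Q·Qᵀ) on ℝ^{n×M} and rank(Q₀) < M. Then Q₀·Q₀ᵀ is a global minimizer of f over the set of n×n positive semidefinite real matrices: for every positive semidefinite Y ∈ ℝ^{n×n}, f(Q₀·Q₀ᵀ) ≤ f(Y). -/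
/-!
Let `X₀ = Q₀ Q₀ᵀ` and `G = Df(X₀)`. Convexity gives `f Y ≥ f X₀ + G Y - G X₀`, so it suffices
that `G Y ≥ 0` for positive semidefinite `Y` and `G X₀ ≤ 0`. Since `rank Q₀ < M`, `Q₀` has a
null vector `v`, and the perturbation `Q₀ + t u vᵀ` moves `X₀` to `X₀ + t² |v|² u uᵀ`; local
minimality along this curve gives `G (u uᵀ) ≥ 0`, hence `G ≥ 0` on the positive semidefinite
cone, whose elements are sums of such `u uᵀ`. Shrinking `Q₀` to `√(1 - s) Q₀` moves `X₀` to
`X₀ - s X₀` and gives `G X₀ ≤ 0`.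
-/

open Matrix Filter Set Topology

attribute [local instance] Matrix.normedAddCommGroup Matrix.normedSpace

theorem Matrix.exists_mulVec_eq_zero_of_rank_lt {K m n : Type*} [Field K] [Fintype m]
    [Fintype n] {A : Matrix m n K} (h : A.rank < Fintype.card n) :
    ∃ v ≠ 0, A *ᵥ v = 0 := by
  have hker : 0 < Module.finrank K (LinearMap.ker A.mulVecLin) := by
    have := LinearMap.finrank_range_add_finrank_ker A.mulVecLin
    rw [Module.finrank_fintype_fun_eq_card] at this
    rw [Matrix.rank] at h
    omega
  obtain ⟨⟨v, hv⟩, hv0⟩ := Module.finrank_pos_iff_exists_ne_zero.mp hker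
  exact ⟨v, by simpa using hv0, hv⟩

open scoped ComplexOrder in
theorem Matrix.PosSemidef.nonneg_of_nonneg_vecMulVec {𝕜 n F : Type*} [RCLike 𝕜] [Finite n]
    [FunLike F (Matrix n n 𝕜) ℝ] [AddMonoidHomClass F (Matrix n n 𝕜) ℝ] {L : F}
    (hL : ∀ u : n → 𝕜, 0 ≤ L (vecMulVec u (star u))) {Y : Matrix n n 𝕜} (hY : Y.PosSemidef) :
    0 ≤ L Y := by
  obtain ⟨r, u, rfl⟩ := Matrix.posSemidef_iff_eq_sum_vecMulVec.mp hY
  rw [map_sum]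
  exact Finset.sum_nonneg fun i _ => hL (u i)

theorem Matrix.add_smul_vecMulVec_mul_transpose_self {R m k : Type*} [CommRing R] [Fintype k]
    {Q : Matrix m k R} {v : k → R} (hv : Q *ᵥ v = 0) (u : m → R) (t : R) :
    (Q + t • vecMulVec u v) * (Q + t • vecMulVec u v)ᵀ
      = Q * Qᵀ + (t ^ 2 * (v ⬝ᵥ v)) • vecMulVec u u := by
  rw [transpose_add, transpose_smul, transpose_vecMulVec, Matrix.add_mul, Matrix.mul_add,
    Matrix.mul_add, Matrix.mul_smul, mul_vecMulVec, hv, Matrix.smul_mul, vecMulVec_mul,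
    vecMul_transpose, hv, Matrix.smul_mul, Matrix.mul_smul, vecMulVec_mul_vecMulVec,
    vecMulVec_smul]
  simp [sq, smul_smul, mul_assoc]

theorem ConvexOn.add_le_of_hasFDerivAt {E : Type*} [NormedAddCommGroup E] [NormedSpace ℝ E]
    {f : E → ℝ} {f' : E →L[ℝ] ℝ} {x : E} (hconv : ConvexOn ℝ univ f) (hf : HasFDerivAt f f' x)
    (y : E) : f x + f' y - f' x ≤ f y := by
  have hline : ConvexOn ℝ univ (f ∘ AffineMap.lineMap x y) := hconv.comp_affineMap _
  have hderiv : HasDerivAt (f ∘ AffineMap.lineMap x y) (f' (y - x)) (0 : ℝ) :=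
    hf.comp_hasDerivAt_of_eq (0 : ℝ) AffineMap.hasDerivAt_lineMap (by simp)
  have := hline.le_slope_of_hasDerivAt (mem_univ 0) (mem_univ 1) one_pos hderiv
  simp only [slope_def_field, Function.comp_apply, AffineMap.lineMap_apply_one,
    AffineMap.lineMap_apply_zero, sub_zero, div_one, map_sub] at this
  linarith

theorem HasFDerivAt.nonneg_of_isLocalMinOn_Ici {E : Type*} [NormedAddCommGroup E]
    [NormedSpace ℝ E] {f : E → ℝ} {f' : E →L[ℝ] ℝ} {x y : E} (hf : HasFDerivAt f f' x)
    (hmin : IsLocalMinOn (fun s : ℝ => f (x + s • y)) (Ici 0) 0) : 0 ≤ f' y := by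
  have hderiv : HasDerivAt (fun s : ℝ => f (x + s • y)) (f' y) 0 := by
    refine hf.comp_hasDerivAt_of_eq 0 ?_ (by simp)
    simpa using ((hasDerivAt_id (0 : ℝ)).smul_const y).const_add x
  have hcone : (1 : ℝ) ∈ posTangentConeAt (Ici 0) 0 :=
    mem_posTangentConeAt_of_segment_subset (by simp [segment_eq_Icc, Icc_subset_Ici_self])
  simpa using hmin.hasFDerivWithinAt_nonneg hderiv.hasFDerivAt.hasFDerivWithinAt hcone

theorem IsLocalMin.isLocalMinOn_Ici_of_lift {E F : Type*} [TopologicalSpace E] [AddCommGroup F]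
    [Module ℝ F] {Φ : E → F} {f : F → ℝ} {q : E} (hmin : IsLocalMin (f ∘ Φ) q) {γ : ℝ → E}
    (hγ : ContinuousWithinAt γ (Ici 0) 0) (hγ0 : γ 0 = q) {y : F}
    (hΦγ : ∀ᶠ s in 𝓝[≥] 0, Φ (γ s) = Φ q + s • y) :
    IsLocalMinOn (fun s : ℝ => f (Φ q + s • y)) (Ici 0) 0 := by
  have hlift : Tendsto γ (𝓝[≥] 0) (𝓝 q) := hγ0 ▸ hγ.tendsto
  filter_upwards [hlift.eventually hmin, hΦγ] with s hs hΦs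
  simpa [← hΦs] using hs

section MulTranspose

variable {m k : Type*} [Fintype m] [Fintype k] {f : Matrix m m ℝ → ℝ}
  {G : Matrix m m ℝ →L[ℝ] ℝ} {Q₀ : Matrix m k ℝ}

theorem nonneg_fderiv_vecMulVec_of_isLocalMin_mul_transpose
    (hmin : IsLocalMin (fun Q : Matrix m k ℝ => f (Q * Qᵀ)) Q₀) (hf : HasFDerivAt f G (Q₀ * Q₀ᵀ))
    {v : k → ℝ} (hv : Q₀ *ᵥ v = 0) (hv0 : v ≠ 0) (u : m → ℝ) : 0 ≤ G (vecMulVec u u) := by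
  have hc : 0 < v ⬝ᵥ v := by simpa using dotProduct_self_star_pos_iff.mpr hv0
  refine hf.nonneg_of_isLocalMinOn_Ici <|
    IsLocalMin.isLocalMinOn_Ici_of_lift (Φ := fun Q => Q * Qᵀ) hmin
      (γ := fun s => Q₀ + √(s / (v ⬝ᵥ v)) • vecMulVec u v) (by fun_prop) (by simp) ?_
  filter_upwards [self_mem_nhdsWithin] with s (hs : 0 ≤ s)
  rw [add_smul_vecMulVec_mul_transpose_self hv, Real.sq_sqrt (div_nonneg hs hc.le),
    div_mul_cancel₀ s hc.ne']

theorem fderiv_self_nonpos_of_isLocalMin_mul_transpose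
    (hmin : IsLocalMin (fun Q : Matrix m k ℝ => f (Q * Qᵀ)) Q₀) (hf : HasFDerivAt f G (Q₀ * Q₀ᵀ)) :
    G (Q₀ * Q₀ᵀ) ≤ 0 := by
  rw [← neg_nonneg, ← map_neg]
  refine hf.nonneg_of_isLocalMinOn_Ici <|
    IsLocalMin.isLocalMinOn_Ici_of_lift (Φ := fun Q => Q * Qᵀ) hmin
      (γ := fun s => √(1 - s) • Q₀) (by fun_prop) (by simp) ?_
  filter_upwards [nhdsWithin_le_nhds (eventually_le_nhds one_pos)] with s (hs : s ≤ 1)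
  rw [transpose_smul, Matrix.smul_mul, Matrix.mul_smul, smul_smul, ← sq,
    Real.sq_sqrt (sub_nonneg.mpr hs), sub_smul, one_smul, smul_neg, sub_eq_add_neg]

end MulTranspose

/-- (Rank-deficient local minima of factorized convex programs are global) Let
`f : ℝ^{n×n} → ℝ` be convex and twice continuously differentiable. If `Q₀ ∈ ℝ^{n×M}` is a
local minimizer of `Q ↦ f(Q·Qᵀ)` and `rank(Q₀) < M`, then `Q₀·Q₀ᵀ` is a global minimizer
of `f` over the positive semidefinite matrices. -/
theorem rank_deficient_local_min_is_global (n M : ℕ)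
    (f : Matrix (Fin n) (Fin n) ℝ → ℝ)
    (hconv : ConvexOn ℝ Set.univ f)
    (hsmooth : ContDiff ℝ 2 f)
    (Q₀ : Matrix (Fin n) (Fin M) ℝ)
    (hloc : IsLocalMin (fun Q : Matrix (Fin n) (Fin M) ℝ => f (Q * Qᵀ)) Q₀)
    (hrank : Q₀.rank < M) :
    ∀ Y : Matrix (Fin n) (Fin n) ℝ, Y.PosSemidef → f (Q₀ * Q₀ᵀ) ≤ f Y := by
  intro Y hY
  obtain ⟨G, hf⟩ : ∃ G, HasFDerivAt f G (Q₀ * Q₀ᵀ) :=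
    ⟨_, (hsmooth.differentiable (by norm_num) _).hasFDerivAt⟩
  obtain ⟨v, hv0, hv⟩ := Q₀.exists_mulVec_eq_zero_of_rank_lt (by simpa using hrank)
  have hGY : 0 ≤ G Y := hY.nonneg_of_nonneg_vecMulVec fun u => by
    simpa using nonneg_fderiv_vecMulVec_of_isLocalMin_mul_transpose hloc hf hv hv0 u
  have hGX₀ := fderiv_self_nonpos_of_isLocalMin_mul_transpose hloc hf
  have hgrad : f (Q₀ * Q₀ᵀ) + G Y - G (Q₀ * Q₀ᵀ) ≤ f Y := hconv.add_le_of_hasFDerivAt hf Y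
  linarith
end
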